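/- Suppose Λ(x) and Λ(y) are positive definite, let t := −g(y), and suppose ‖x − y‖_x < 1/2. Then Λ(H(x)⁻¹·t) is positive semidefinite (i.e., x certifies t, the vector whose gradient certificate is y). -/

import Mathlib

open Matrix

/-- The gradient of the barrier `f(x) = -log det Λ(x)`:
`g(x)_i = -tr(Λ(x)⁻¹ · Λ(e_i))` (with the total matrix inverse, `0` for singular matrices). -/
noncomputable def grad {U L : ℕ} (Lam : (Fin U → ℝ) →ₗ[ℝ] Matrix (Fin L) (Fin L) ℝ)
    (x : Fin U → ℝ) : Fin U → ℝ :=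
  fun i => -((Lam x)⁻¹ * Lam (Pi.single i 1)).trace

/-- The Hessian of the barrier: `H(x)_{ij} = tr(Λ(x)⁻¹ Λ(e_i) Λ(x)⁻¹ Λ(e_j))`. -/
noncomputable def hess {U L : ℕ} (Lam : (Fin U → ℝ) →ₗ[ℝ] Matrix (Fin L) (Fin L) ℝ)
    (x : Fin U → ℝ) : Matrix (Fin U) (Fin U) ℝ :=
  Matrix.of fun i j =>
    ((Lam x)⁻¹ * Lam (Pi.single i 1) * (Lam x)⁻¹ * Lam (Pi.single j 1)).trace

/-- The local norm `‖v‖_x = (vᵀ H(x) v)^{1/2}`. -/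
noncomputable def locNorm {U L : ℕ} (Lam : (Fin U → ℝ) →ₗ[ℝ] Matrix (Fin L) (Fin L) ℝ)
    (x v : Fin U → ℝ) : ℝ :=
  Real.sqrt (v ⬝ᵥ (hess Lam x).mulVec v)

/-- The dual local norm `‖t‖*_x = (tᵀ H(x)⁻¹ t)^{1/2}`. -/
noncomputable def dualNorm {U L : ℕ} (Lam : (Fin U → ℝ) →ₗ[ℝ] Matrix (Fin L) (Fin L) ℝ)
    (x t : Fin U → ℝ) : ℝ :=
  Real.sqrt (t ⬝ᵥ (hess Lam x)⁻¹.mulVec t)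

/-!
Write `Λ(x) = R²` with `R` symmetric and pass to `M(v) := R⁻¹ Λ(v) R⁻¹`, so that `M(x) = 1`,
`vᵀ H(x) w = tr(M(v) M(w))` is the Frobenius inner product and `wᵀ g(y) = -tr(M(y)⁻¹ M(w))`.
For `v := H(x)⁻¹ t` this says that `M(v) - M(y)⁻¹` is Frobenius-orthogonal to the range of `M`,
in particular to `M(v) - 1 = M(v - x)`; hence `‖M(v) - 1‖ ≤ ‖M(y)⁻¹ - 1‖`. With `D := M(y) - 1`
we have `‖D‖ = ‖x - y‖_x ≤ 1/2`, and `(1 + D)⁻¹ - 1 = -(1 + D)⁻¹ D` gives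
`‖M(y)⁻¹ - 1‖ ≤ ‖D‖ / (1 - ‖D‖) ≤ 1`. A symmetric matrix within Frobenius distance `1` of the
identity is positive semidefinite, and so is its congruent `Λ(v) = R M(v) R`.
-/

theorem norm_sub_one_mul_one_sub_norm_le {R : Type*} [SeminormedRing R] {a d : R}
    (h : a * (1 + d) = 1) : ‖a - 1‖ * (1 - ‖d‖) ≤ ‖d‖ := by
  have hsub : a - 1 = -((a - 1) * d + d) := by
    rw [mul_add, mul_one] at h
    calc a - 1 = -(a * d) := by rw [← h]; abel
      _ = -((a - 1) * d + d) := by noncomm_ring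
  have hle : ‖a - 1‖ ≤ ‖a - 1‖ * ‖d‖ + ‖d‖ :=
    calc ‖a - 1‖ = ‖(a - 1) * d + d‖ := (congrArg norm hsub).trans (norm_neg _)
      _ ≤ ‖(a - 1) * d‖ + ‖d‖ := norm_add_le _ _
      _ ≤ ‖a - 1‖ * ‖d‖ + ‖d‖ := by gcongr; exact norm_mul_le _ _
  linarith

namespace Matrix

variable {m n α : Type*} [Fintype m] [Fintype n]

theorem trace_mul_mul_mul_mul_swap [CommSemiring α] (A P Q : Matrix n n α) :
    (A * P * A * Q).trace = (A * Q * A * P).trace := by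
  rw [Matrix.mul_assoc (A * P), trace_mul_comm, ← Matrix.mul_assoc]

theorem IsSymm.mul_mul_same [CommSemiring α] {A S : Matrix n n α}
    (hA : A.IsSymm) (hS : S.IsSymm) : (S * A * S).IsSymm := by
  simp only [IsSymm, transpose_mul, hS.eq, hA.eq, Matrix.mul_assoc]

theorem mul_nonsing_inv_conj_mul [DecidableEq n] [CommRing α]
    {S : Matrix n n α} (hS : IsUnit S) (A : Matrix n n α) : S * (S⁻¹ * A * S⁻¹) * S = A := by
  have hdet := (isUnit_iff_isUnit_det S).mp hS
  simp only [Matrix.mul_assoc, mul_nonsing_inv_cancel_left _ _ hdet, nonsing_inv_mul _ hdet,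
    Matrix.mul_one]

open scoped MatrixOrder Norms.L2Operator in
theorem PosDef.exists_isSymm_isUnit_mul_self_eq [DecidableEq n] {A : Matrix n n ℝ}
    (hA : A.PosDef) : ∃ R : Matrix n n ℝ, R.IsSymm ∧ IsUnit R ∧ R * R = A := by
  have hRR : CFC.sqrt A * CFC.sqrt A = A := CFC.sqrt_mul_sqrt_self A hA.posSemidef.nonneg
  refine ⟨CFC.sqrt A, ?_, isUnit_of_mul_isUnit_left (hRR ▸ hA.isUnit), hRR⟩
  exact isHermitian_iff_isSymm.mp (CFC.sqrt_nonneg A).posSemidef.isHermitian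

open scoped Norms.Frobenius

theorem dotProduct_self_nonneg (u : n → ℝ) : 0 ≤ u ⬝ᵥ u :=
  Finset.sum_nonneg fun i _ ↦ mul_self_nonneg (u i)

theorem frobenius_norm_eq_sqrt (A : Matrix m n ℝ) : ‖A‖ = √(∑ i, ∑ j, A i j ^ 2) := by
  rw [frobenius_norm_def, Real.sqrt_eq_rpow]
  simp

theorem trace_mul_transpose_eq_sum (A B : Matrix m n ℝ) :
    (A * Bᵀ).trace = ∑ i, ∑ j, A i j * B i j := by
  simp [trace, mul_apply]

theorem trace_mul_transpose_le (A B : Matrix m n ℝ) : (A * Bᵀ).trace ≤ ‖A‖ * ‖B‖ := by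
  simpa only [trace_mul_transpose_eq_sum, frobenius_norm_eq_sqrt, Finset.sum_product]
    using Real.sum_mul_le_sqrt_mul_sqrt (Finset.univ ×ˢ Finset.univ)
      (fun p : m × n ↦ A p.1 p.2) (fun p ↦ B p.1 p.2)

theorem frobenius_norm_sq_eq_trace_mul_self {A : Matrix n n ℝ} (hA : A.IsSymm) :
    ‖A‖ ^ 2 = (A * A).trace := by
  calc ‖A‖ ^ 2 = (A * Aᵀ).trace := by
        rw [frobenius_norm_eq_sqrt, Real.sq_sqrt (by positivity), trace_mul_transpose_eq_sum]
        simp only [sq]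
    _ = (A * A).trace := by rw [hA.eq]

theorem frobenius_norm_vecMulVec_self (u : n → ℝ) : ‖vecMulVec u u‖ = u ⬝ᵥ u := by
  have h : ∑ i, ∑ j, vecMulVec u u i j ^ 2 = (u ⬝ᵥ u) ^ 2 := by
    simp only [vecMulVec_apply, dotProduct, sq, Finset.sum_mul_sum]
    exact Finset.sum_congr rfl fun i _ ↦ Finset.sum_congr rfl fun j _ ↦ by ring
  rw [frobenius_norm_eq_sqrt, h, Real.sqrt_sq (dotProduct_self_nonneg u)]

theorem dotProduct_mulVec_self_eq_trace (A : Matrix n n ℝ) (u : n → ℝ) :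
    u ⬝ᵥ A *ᵥ u = (A * (vecMulVec u u)ᵀ).trace := by
  simp only [trace_mul_transpose_eq_sum, vecMulVec_apply, dotProduct, mulVec, Finset.mul_sum]
  exact Finset.sum_congr rfl fun i _ ↦ Finset.sum_congr rfl fun j _ ↦ by ring

variable [DecidableEq n]

theorem posSemidef_of_frobenius_norm_sub_one_le_one {K : Matrix n n ℝ} (hK : K.IsSymm)
    (h : ‖K - 1‖ ≤ 1) : K.PosSemidef := by
  refine .of_dotProduct_mulVec_nonneg (isHermitian_iff_isSymm.mpr hK) fun u ↦ ?_
  have hdev : u ⬝ᵥ (1 - K) *ᵥ u ≤ u ⬝ᵥ u :=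
    calc u ⬝ᵥ (1 - K) *ᵥ u ≤ ‖1 - K‖ * ‖vecMulVec u u‖ := by
          rw [dotProduct_mulVec_self_eq_trace]; exact trace_mul_transpose_le _ _
      _ ≤ 1 * (u ⬝ᵥ u) := by
          rw [norm_sub_rev, frobenius_norm_vecMulVec_self]
          exact mul_le_mul_of_nonneg_right h (dotProduct_self_nonneg u)
      _ = u ⬝ᵥ u := one_mul _
  rw [sub_mulVec, one_mulVec, dotProduct_sub] at hdev
  simpa using hdev

theorem frobenius_norm_le_of_trace_sub_mul_eq_zero {A B : Matrix n n ℝ} (hA : A.IsSymm)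
    (h : ((A - B) * A).trace = 0) : ‖A‖ ≤ ‖B‖ := by
  have hsq : ‖A‖ ^ 2 ≤ ‖B‖ * ‖A‖ :=
    calc ‖A‖ ^ 2 = (B * Aᵀ).trace := by
          rw [frobenius_norm_sq_eq_trace_mul_self hA, hA.eq, ← sub_eq_zero, ← trace_sub,
            ← sub_mul, h]
      _ ≤ ‖B‖ * ‖A‖ := trace_mul_transpose_le B A
  nlinarith [norm_nonneg A, norm_nonneg B]

theorem posSemidef_of_trace_sub_mul_sub_one_eq_zero {K N D : Matrix n n ℝ} (hK : K.IsSymm)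
    (hN : N * (1 + D) = 1) (hD : ‖D‖ ≤ 1 / 2) (horth : ((K - N) * (K - 1)).trace = 0) :
    K.PosSemidef := by
  have hN1 : ‖N - 1‖ * (1 - ‖D‖) ≤ ‖D‖ := norm_sub_one_mul_one_sub_norm_le hN
  have hK1 : ‖K - 1‖ ≤ ‖N - 1‖ :=
    frobenius_norm_le_of_trace_sub_mul_eq_zero (hK.sub isSymm_one)
      (by rwa [sub_sub_sub_cancel_right])
  refine posSemidef_of_frobenius_norm_sub_one_le_one hK (hK1.trans ?_)
  nlinarith [norm_nonneg (N - 1), norm_nonneg D]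

end Matrix

open scoped Matrix.Norms.Frobenius

section Barrier

variable {U L : ℕ} (Lam : (Fin U → ℝ) →ₗ[ℝ] Matrix (Fin L) (Fin L) ℝ)

theorem trace_mul_map_eq_sum (A : Matrix (Fin L) (Fin L) ℝ) (w : Fin U → ℝ) :
    (A * Lam w).trace = ∑ i, w i * (A * Lam (Pi.single i 1)).trace := by
  have hsingle (i : Fin U) : Pi.single i (w i) = w i • Pi.single i (1 : ℝ) := by
    rw [← Pi.single_smul', smul_eq_mul, mul_one]
  conv_lhs => rw [← Finset.univ_sum_single w]
  simp only [hsingle, map_sum, map_smul, Matrix.mul_sum, Matrix.mul_smul, trace_sum, trace_smul,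
    smul_eq_mul]

theorem dotProduct_grad (y w : Fin U → ℝ) :
    w ⬝ᵥ grad Lam y = -((Lam y)⁻¹ * Lam w).trace := by
  simp only [trace_mul_map_eq_sum Lam _ w, dotProduct, grad, mul_neg, Finset.sum_neg_distrib]

theorem dotProduct_hess_mulVec (x v w : Fin U → ℝ) :
    v ⬝ᵥ hess Lam x *ᵥ w = ((Lam x)⁻¹ * Lam v * (Lam x)⁻¹ * Lam w).trace := by
  set A := (Lam x)⁻¹
  calc v ⬝ᵥ hess Lam x *ᵥ w
      = ∑ i, v i * ∑ j, w j * (A * Lam (Pi.single i 1) * A * Lam (Pi.single j 1)).trace := by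
        simp only [dotProduct, mulVec, hess, of_apply, A, mul_comm]
    _ = ∑ i, v i * (A * Lam (Pi.single i 1) * A * Lam w).trace := by
        simp only [← trace_mul_map_eq_sum]
    _ = ∑ i, v i * (A * Lam w * A * Lam (Pi.single i 1)).trace := by
        simp only [trace_mul_mul_mul_mul_swap A (Lam w)]
    _ = (A * Lam v * A * Lam w).trace := by
        rw [← trace_mul_map_eq_sum, trace_mul_mul_mul_mul_swap]

theorem hess_isSymm (x : Fin U → ℝ) : (hess Lam x).IsSymm :=
  IsSymm.ext fun _ _ ↦ trace_mul_mul_mul_mul_swap (Lam x)⁻¹ _ _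

variable {Lam} {x : Fin U → ℝ} {R : Matrix (Fin L) (Fin L) ℝ}

theorem dotProduct_hess_mulVec_eq_trace (hRx : R * R = Lam x) (v w : Fin U → ℝ) :
    v ⬝ᵥ hess Lam x *ᵥ w = ((R⁻¹ * Lam v * R⁻¹) * (R⁻¹ * Lam w * R⁻¹)).trace := by
  rw [dotProduct_hess_mulVec, ← hRx, Matrix.mul_inv_rev]
  calc (R⁻¹ * R⁻¹ * Lam v * (R⁻¹ * R⁻¹) * Lam w).trace
      = (R⁻¹ * (R⁻¹ * Lam v * R⁻¹ * R⁻¹ * Lam w)).trace := by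
        simp only [Matrix.mul_assoc]
    _ = (R⁻¹ * Lam v * R⁻¹ * R⁻¹ * Lam w * R⁻¹).trace := trace_mul_comm _ _
    _ = _ := by simp only [Matrix.mul_assoc]

theorem dotProduct_grad_eq_trace (hR : IsUnit R) (y w : Fin U → ℝ) :
    w ⬝ᵥ grad Lam y = -((R * (Lam y)⁻¹ * R) * (R⁻¹ * Lam w * R⁻¹)).trace := by
  rw [dotProduct_grad, ← trace_conj hR]
  simp only [Matrix.mul_assoc, mul_nonsing_inv_cancel_left _ _ ((isUnit_iff_isUnit_det R).mp hR)]

theorem trace_mul_eq_of_hess_mulVec_eq_neg_grad (hR : IsUnit R) (hRx : R * R = Lam x)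
    {v y : Fin U → ℝ} (hv : hess Lam x *ᵥ v = -grad Lam y) (w : Fin U → ℝ) :
    ((R⁻¹ * Lam v * R⁻¹) * (R⁻¹ * Lam w * R⁻¹)).trace
      = ((R * (Lam y)⁻¹ * R) * (R⁻¹ * Lam w * R⁻¹)).trace := by
  rw [trace_mul_comm, ← dotProduct_hess_mulVec_eq_trace hRx, hv, dotProduct_neg,
    dotProduct_grad_eq_trace hR, neg_neg]

theorem hess_posDef (hinj : Function.Injective Lam) (hsym : ∀ v, (Lam v).IsSymm)
    (hx : (Lam x).PosDef) : (hess Lam x).PosDef := by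
  obtain ⟨R, hRs, hR, hRx⟩ := hx.exists_isSymm_isUnit_mul_self_eq
  refine .of_dotProduct_mulVec_pos (isHermitian_iff_isSymm.mpr (hess_isSymm Lam x)) fun v hv ↦ ?_
  have hMv : R⁻¹ * Lam v * R⁻¹ ≠ 0 := fun h0 ↦ hv <| hinj <| by
    rw [map_zero, ← mul_nonsing_inv_conj_mul hR (Lam v), h0, Matrix.mul_zero, Matrix.zero_mul]
  rw [star_trivial, dotProduct_hess_mulVec_eq_trace hRx,
    ← frobenius_norm_sq_eq_trace_mul_self ((hsym v).mul_mul_same hRs.inv)]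
  exact pow_pos (norm_pos_iff.mpr hMv) 2

theorem locNorm_eq_frobenius_norm (hsym : ∀ v, (Lam v).IsSymm) (hRs : R.IsSymm)
    (hRx : R * R = Lam x) (v : Fin U → ℝ) :
    locNorm Lam x v = ‖R⁻¹ * Lam v * R⁻¹‖ := by
  rw [locNorm, dotProduct_hess_mulVec_eq_trace hRx,
    ← frobenius_norm_sq_eq_trace_mul_self ((hsym v).mul_mul_same hRs.inv),
    Real.sqrt_sq (norm_nonneg _)]

end Barrier

theorem stmt10_general {U L : ℕ}
    (Lam : (Fin U → ℝ) →ₗ[ℝ] Matrix (Fin L) (Fin L) ℝ)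
    (hinj : Function.Injective Lam) (hsym : ∀ v, (Lam v).IsSymm)
    (x y : Fin U → ℝ) (hx : (Lam x).PosDef) (hy : (Lam y).PosDef)
    (t : Fin U → ℝ) (ht : t = -grad Lam y)
    (h : locNorm Lam x (x - y) < 1 / 2) :
    (Lam ((hess Lam x)⁻¹.mulVec t)).PosSemidef := by
  obtain ⟨R, hRs, hR, hRx⟩ := hx.exists_isSymm_isUnit_mul_self_eq
  have hdetR := (isUnit_iff_isUnit_det R).mp hR
  set M : (Fin U → ℝ) → Matrix (Fin L) (Fin L) ℝ := fun w ↦ R⁻¹ * Lam w * R⁻¹ with hM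
  have hMx : M x = 1 := by
    simp only [hM, ← hRx, Matrix.mul_assoc, nonsing_inv_mul_cancel_left _ _ hdetR,
      mul_nonsing_inv _ hdetR]
  have hMsub (a b : Fin U → ℝ) : M (a - b) = M a - M b := by
    simp only [hM, map_sub, Matrix.mul_sub, Matrix.sub_mul]
  set v := (hess Lam x)⁻¹ *ᵥ t
  have hv : hess Lam x *ᵥ v = -grad Lam y := by
    have hdetH := (isUnit_iff_isUnit_det _).mp (hess_posDef hinj hsym hx).isUnit
    rw [← ht, mulVec_mulVec, mul_nonsing_inv _ hdetH, one_mulVec]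
  have hN : R * (Lam y)⁻¹ * R * (1 + (M y - 1)) = 1 := by
    have hdety := (isUnit_iff_isUnit_det _).mp hy.isUnit
    simp only [add_sub_cancel, hM, Matrix.mul_assoc, mul_nonsing_inv_cancel_left _ _ hdetR,
      nonsing_inv_mul_cancel_left _ _ hdety, mul_nonsing_inv _ hdetR]
  have hD : ‖M y - 1‖ ≤ 1 / 2 := by
    rw [← hMx, ← norm_neg, neg_sub, ← hMsub, ← locNorm_eq_frobenius_norm hsym hRs hRx]
    exact h.le
  have horth : ((M v - R * (Lam y)⁻¹ * R) * (M v - 1)).trace = 0 := by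
    rw [← hMx, ← hMsub, Matrix.sub_mul, trace_sub,
      trace_mul_eq_of_hess_mulVec_eq_neg_grad hR hRx hv, sub_self]
  rw [← mul_nonsing_inv_conj_mul hR (Lam v)]
  simpa [conjTranspose_eq_transpose_of_trivial, hRs.eq] using
    (posSemidef_of_trace_sub_mul_sub_one_eq_zero ((hsym v).mul_mul_same hRs.inv) hN hD
      horth).mul_mul_conjTranspose_same R

/-- if `t = -g(y)` and `‖x − y‖_x < 1/2` then `x` certifies `t`. -/
theorem stmt10 {U L : ℕ} (hU : 0 < U) (hL : 0 < L)
    (Lam : (Fin U → ℝ) →ₗ[ℝ] Matrix (Fin L) (Fin L) ℝ)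
    (hinj : Function.Injective Lam) (hsym : ∀ v, (Lam v).IsSymm)
    (x y : Fin U → ℝ) (hx : (Lam x).PosDef) (hy : (Lam y).PosDef)
    (t : Fin U → ℝ) (ht : t = -grad Lam y)
    (h : locNorm Lam x (x - y) < 1 / 2) :
    (Lam ((hess Lam x)⁻¹.mulVec t)).PosSemidef :=
  stmt10_general Lam hinj hsym x y hx hy t ht h
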